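/- arXiv:2011.09711 — 2 statements merged into one kernel-verified Lean document; each statement's English description precedes it below -/
import Mathlib

section
/- Set c = (1−F²)/(|ξ|³|ξ|_F) and D = (F²ξ₃⁴−|ξ_h|⁴)/|ξ|_F². Then: (i) for every X∈ℝ, det(X·I₃ − M(ξ)) = (X − cξ₃²)·(X² − cD·X − c²ξ₃²|ξ_h|²); in particular the eigenvalues of M(ξ) are cξ₃² and (c/2)(D ± √(D²+4ξ₃²|ξ_h|²)); (ii) the vector (−ξ₂, ξ₁, 0) satisfies M(ξ)·(−ξ₂, ξ₁, 0)ᵀ = cξ₃²·(−ξ₂, ξ₁, 0)ᵀ. -/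
/-!
`M(ξ)` is `c` times a matrix `N` built from the two scalars `A_F(ξ)` and `B_F(ξ)`. For any
values of these scalars, `N` maps `w = (−ξ₂, ξ₁, 0)` to `ξ₃² w` and leaves the plane spanned by
`(ξ₁, ξ₂, 0)` and `e₃` invariant, so its characteristic polynomial is `(X − ξ₃²)` times that of
the `2 × 2` block of `N` on this plane. Substituting the actual `A_F` and `B_F`, the trace of the
block becomes `D` and its determinant `−ξ₃² |ξ_h|²`.
-/

open Matrix

noncomputable def Mmat (F ξ1 ξ2 ξ3 : ℝ) : Matrix (Fin 3) (Fin 3) ℝ :=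
  ((1 - F ^ 2) /
      ((Real.sqrt (ξ1 ^ 2 + ξ2 ^ 2 + ξ3 ^ 2)) ^ 3 *
        Real.sqrt (ξ1 ^ 2 + ξ2 ^ 2 + F ^ 2 * ξ3 ^ 2))) •
    !![ξ3 ^ 2 * (1 - ξ1 ^ 2 * (3 / (ξ1 ^ 2 + ξ2 ^ 2 + ξ3 ^ 2) +
        1 / (ξ1 ^ 2 + ξ2 ^ 2 + F ^ 2 * ξ3 ^ 2))),
      -(ξ1 * ξ2 * ξ3 ^ 2) * (3 / (ξ1 ^ 2 + ξ2 ^ 2 + ξ3 ^ 2) +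
        1 / (ξ1 ^ 2 + ξ2 ^ 2 + F ^ 2 * ξ3 ^ 2)),
      ξ1 * ξ3 * (2 - ξ3 ^ 2 * (3 / (ξ1 ^ 2 + ξ2 ^ 2 + ξ3 ^ 2) +
        F ^ 2 / (ξ1 ^ 2 + ξ2 ^ 2 + F ^ 2 * ξ3 ^ 2)));
      -(ξ1 * ξ2 * ξ3 ^ 2) * (3 / (ξ1 ^ 2 + ξ2 ^ 2 + ξ3 ^ 2) +
        1 / (ξ1 ^ 2 + ξ2 ^ 2 + F ^ 2 * ξ3 ^ 2)),
      ξ3 ^ 2 * (1 - ξ2 ^ 2 * (3 / (ξ1 ^ 2 + ξ2 ^ 2 + ξ3 ^ 2) +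
        1 / (ξ1 ^ 2 + ξ2 ^ 2 + F ^ 2 * ξ3 ^ 2))),
      ξ2 * ξ3 * (2 - ξ3 ^ 2 * (3 / (ξ1 ^ 2 + ξ2 ^ 2 + ξ3 ^ 2) +
        F ^ 2 / (ξ1 ^ 2 + ξ2 ^ 2 + F ^ 2 * ξ3 ^ 2)));
      ξ1 * ξ3 * (2 - ξ3 ^ 2 * (3 / (ξ1 ^ 2 + ξ2 ^ 2 + ξ3 ^ 2) +
        F ^ 2 / (ξ1 ^ 2 + ξ2 ^ 2 + F ^ 2 * ξ3 ^ 2))),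
      ξ2 * ξ3 * (2 - ξ3 ^ 2 * (3 / (ξ1 ^ 2 + ξ2 ^ 2 + ξ3 ^ 2) +
        F ^ 2 / (ξ1 ^ 2 + ξ2 ^ 2 + F ^ 2 * ξ3 ^ 2))),
      -(ξ1 ^ 2 + ξ2 ^ 2) * (1 - ξ3 ^ 2 * (3 / (ξ1 ^ 2 + ξ2 ^ 2 + ξ3 ^ 2) +
        F ^ 2 / (ξ1 ^ 2 + ξ2 ^ 2 + F ^ 2 * ξ3 ^ 2)))]

noncomputable def cCoef (F ξ1 ξ2 ξ3 : ℝ) : ℝ :=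
  (1 - F ^ 2) /
    ((Real.sqrt (ξ1 ^ 2 + ξ2 ^ 2 + ξ3 ^ 2)) ^ 3 *
      Real.sqrt (ξ1 ^ 2 + ξ2 ^ 2 + F ^ 2 * ξ3 ^ 2))

noncomputable def Dcoef (F ξ1 ξ2 ξ3 : ℝ) : ℝ :=
  (F ^ 2 * ξ3 ^ 4 - (ξ1 ^ 2 + ξ2 ^ 2) ^ 2) / (ξ1 ^ 2 + ξ2 ^ 2 + F ^ 2 * ξ3 ^ 2)

theorem sq_sub_mul_sub_eq_zero_of_eq_root {c D E s X : ℝ} (hs : s ^ 2 = D ^ 2 + 4 * E)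
    (hX : X = c / 2 * (D + s) ∨ X = c / 2 * (D - s)) :
    X ^ 2 - c * D * X - c ^ 2 * E = 0 := by
  rcases hX with rfl | rfl <;> linear_combination c ^ 2 / 4 * hs

section HessShape

variable (A B ξ1 ξ2 ξ3 : ℝ)

/-- The bracketed matrix in `M(ξ)`, with `A_F(ξ)` and `B_F(ξ)` replaced by free scalars. -/
def hessShape : Matrix (Fin 3) (Fin 3) ℝ :=
  !![ξ3 ^ 2 * (1 - ξ1 ^ 2 * A), -(ξ1 * ξ2 * ξ3 ^ 2) * A, ξ1 * ξ3 * (2 - ξ3 ^ 2 * B);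
    -(ξ1 * ξ2 * ξ3 ^ 2) * A, ξ3 ^ 2 * (1 - ξ2 ^ 2 * A), ξ2 * ξ3 * (2 - ξ3 ^ 2 * B);
    ξ1 * ξ3 * (2 - ξ3 ^ 2 * B), ξ2 * ξ3 * (2 - ξ3 ^ 2 * B), -(ξ1 ^ 2 + ξ2 ^ 2) * (1 - ξ3 ^ 2 * B)]

/-- Trace of `hessShape` on the invariant plane spanned by `(ξ₁, ξ₂, 0)` and `e₃`. -/
def hessShapeBlockTrace : ℝ :=
  ξ3 ^ 2 * (1 - (ξ1 ^ 2 + ξ2 ^ 2) * A) - (ξ1 ^ 2 + ξ2 ^ 2) * (1 - ξ3 ^ 2 * B)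

/-- Determinant of `hessShape` on the invariant plane spanned by `(ξ₁, ξ₂, 0)` and `e₃`. -/
def hessShapeBlockDet : ℝ :=
  -(ξ3 ^ 2 * (ξ1 ^ 2 + ξ2 ^ 2)) *
    ((1 - (ξ1 ^ 2 + ξ2 ^ 2) * A) * (1 - ξ3 ^ 2 * B) + (2 - ξ3 ^ 2 * B) ^ 2)

theorem hessShape_mulVec :
    hessShape A B ξ1 ξ2 ξ3 *ᵥ ![-ξ2, ξ1, 0] = ξ3 ^ 2 • ![-ξ2, ξ1, 0] := by
  ext i
  fin_cases i <;>
    simp only [hessShape, mulVec, dotProduct, Fin.sum_univ_three, Fin.zero_eta, Fin.mk_one,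
      Fin.reduceFinMk, Fin.isValue, of_apply, cons_val', cons_val_zero, cons_val_one, cons_val,
      cons_val_fin_one, Pi.smul_apply, smul_eq_mul] <;>
    ring

theorem det_smul_one_sub_smul_hessShape (c X : ℝ) :
    (X • (1 : Matrix (Fin 3) (Fin 3) ℝ) - c • hessShape A B ξ1 ξ2 ξ3).det =
      (X - c * ξ3 ^ 2) *
        (X ^ 2 - c * hessShapeBlockTrace A B ξ1 ξ2 ξ3 * X +
          c ^ 2 * hessShapeBlockDet A B ξ1 ξ2 ξ3) := by
  rw [det_fin_three]
  simp only [hessShape, hessShapeBlockTrace, hessShapeBlockDet, smul_of, smul_cons, smul_eq_mul,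
    smul_empty, Matrix.sub_apply, Matrix.smul_apply, of_apply, Fin.isValue, one_apply, cons_val',
    cons_val_zero, cons_val_one, cons_val, cons_val_fin_one, Fin.reduceEq, ↓reduceIte]
  ring

end HessShape

section Substitution

variable {F ξ1 ξ2 ξ3 : ℝ}

theorem sq_add_sq_add_mul_sq_pos {a : ℝ} (ha : 0 < a) (hξ : ¬(ξ1 = 0 ∧ ξ2 = 0 ∧ ξ3 = 0)) :
    0 < ξ1 ^ 2 + ξ2 ^ 2 + a * ξ3 ^ 2 := by
  simp only [not_and_or] at hξ
  rcases hξ with h | h | h <;> positivity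

theorem hessShapeBlockTrace_eq_Dcoef (hv : ξ1 ^ 2 + ξ2 ^ 2 + F ^ 2 * ξ3 ^ 2 ≠ 0) (u : ℝ) :
    hessShapeBlockTrace (3 / u + 1 / (ξ1 ^ 2 + ξ2 ^ 2 + F ^ 2 * ξ3 ^ 2))
      (3 / u + F ^ 2 / (ξ1 ^ 2 + ξ2 ^ 2 + F ^ 2 * ξ3 ^ 2)) ξ1 ξ2 ξ3 = Dcoef F ξ1 ξ2 ξ3 := by
  rw [hessShapeBlockTrace, Dcoef, eq_div_iff hv]
  generalize hV : ξ1 ^ 2 + ξ2 ^ 2 + F ^ 2 * ξ3 ^ 2 = v at *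
  field_simp
  rw [← hV]
  ring

theorem hessShapeBlockDet_eq (hu : ξ1 ^ 2 + ξ2 ^ 2 + ξ3 ^ 2 ≠ 0)
    (hv : ξ1 ^ 2 + ξ2 ^ 2 + F ^ 2 * ξ3 ^ 2 ≠ 0) :
    hessShapeBlockDet (3 / (ξ1 ^ 2 + ξ2 ^ 2 + ξ3 ^ 2) + 1 / (ξ1 ^ 2 + ξ2 ^ 2 + F ^ 2 * ξ3 ^ 2))
      (3 / (ξ1 ^ 2 + ξ2 ^ 2 + ξ3 ^ 2) + F ^ 2 / (ξ1 ^ 2 + ξ2 ^ 2 + F ^ 2 * ξ3 ^ 2)) ξ1 ξ2 ξ3 =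
      -(ξ3 ^ 2 * (ξ1 ^ 2 + ξ2 ^ 2)) := by
  rw [hessShapeBlockDet]
  generalize hU : ξ1 ^ 2 + ξ2 ^ 2 + ξ3 ^ 2 = u at *
  generalize hV : ξ1 ^ 2 + ξ2 ^ 2 + F ^ 2 * ξ3 ^ 2 = v at *
  field_simp
  rw [← hU, ← hV]
  ring

end Substitution

/-- (i) the characteristic polynomial of `M(ξ)` factors as
`(X−cξ₃²)(X²−cDX−c²ξ₃²|ξ_h|²)`; in particular the eigenvalues of `M(ξ)` are
`cξ₃²` and `(c/2)(D ± √(D²+4ξ₃²|ξ_h|²))`; (ii) `(−ξ₂,ξ₁,0)` is an eigenvector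
for the eigenvalue `cξ₃²`. -/
theorem Mmat_charpoly_and_eigenvector (F ξ1 ξ2 ξ3 : ℝ) (hF : 0 < F)
    (hξ : ¬(ξ1 = 0 ∧ ξ2 = 0 ∧ ξ3 = 0)) :
    (∀ X : ℝ,
      (X • (1 : Matrix (Fin 3) (Fin 3) ℝ) - Mmat F ξ1 ξ2 ξ3).det =
        (X - cCoef F ξ1 ξ2 ξ3 * ξ3 ^ 2) *
          (X ^ 2 - cCoef F ξ1 ξ2 ξ3 * Dcoef F ξ1 ξ2 ξ3 * X -
            (cCoef F ξ1 ξ2 ξ3) ^ 2 * ξ3 ^ 2 * (ξ1 ^ 2 + ξ2 ^ 2))) ∧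
    (∀ X : ℝ,
      (X = cCoef F ξ1 ξ2 ξ3 * ξ3 ^ 2 ∨
        X = cCoef F ξ1 ξ2 ξ3 / 2 *
          (Dcoef F ξ1 ξ2 ξ3 +
            Real.sqrt ((Dcoef F ξ1 ξ2 ξ3) ^ 2 + 4 * ξ3 ^ 2 * (ξ1 ^ 2 + ξ2 ^ 2))) ∨
        X = cCoef F ξ1 ξ2 ξ3 / 2 *
          (Dcoef F ξ1 ξ2 ξ3 -
            Real.sqrt ((Dcoef F ξ1 ξ2 ξ3) ^ 2 + 4 * ξ3 ^ 2 * (ξ1 ^ 2 + ξ2 ^ 2)))) →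
      (X • (1 : Matrix (Fin 3) (Fin 3) ℝ) - Mmat F ξ1 ξ2 ξ3).det = 0) ∧
    (Mmat F ξ1 ξ2 ξ3).mulVec ![-ξ2, ξ1, 0] =
      (cCoef F ξ1 ξ2 ξ3 * ξ3 ^ 2) • ![-ξ2, ξ1, 0] := by
  set u := ξ1 ^ 2 + ξ2 ^ 2 + ξ3 ^ 2
  set v := ξ1 ^ 2 + ξ2 ^ 2 + F ^ 2 * ξ3 ^ 2
  set c := cCoef F ξ1 ξ2 ξ3
  set D := Dcoef F ξ1 ξ2 ξ3
  have hu : u ≠ 0 := by simpa using (sq_add_sq_add_mul_sq_pos one_pos hξ).ne'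
  have hv : v ≠ 0 := (sq_add_sq_add_mul_sq_pos (pow_pos hF 2) hξ).ne'
  have hM : Mmat F ξ1 ξ2 ξ3 = c • hessShape (3 / u + 1 / v) (3 / u + F ^ 2 / v) ξ1 ξ2 ξ3 := rfl
  have charpoly (X : ℝ) : (X • (1 : Matrix (Fin 3) (Fin 3) ℝ) - Mmat F ξ1 ξ2 ξ3).det =
      (X - c * ξ3 ^ 2) * (X ^ 2 - c * D * X - c ^ 2 * ξ3 ^ 2 * (ξ1 ^ 2 + ξ2 ^ 2)) := by
    rw [hM, det_smul_one_sub_smul_hessShape, hessShapeBlockTrace_eq_Dcoef hv,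
      hessShapeBlockDet_eq hu hv]
    ring
  refine ⟨charpoly, fun X hX => ?_, ?_⟩
  · rw [charpoly, mul_eq_zero]
    rcases hX with rfl | hX
    · exact Or.inl (sub_self _)
    · refine Or.inr ?_
      have hs : √(D ^ 2 + 4 * ξ3 ^ 2 * (ξ1 ^ 2 + ξ2 ^ 2)) ^ 2 =
          D ^ 2 + 4 * (ξ3 ^ 2 * (ξ1 ^ 2 + ξ2 ^ 2)) := by
        rw [Real.sq_sqrt (by positivity)]
        ring
      linear_combination sq_sub_mul_sub_eq_zero_of_eq_root hs hX
  · rw [hM, smul_mulVec, hessShape_mulVec, smul_smul]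
end

section
/- Assume in addition F≠1. Then the rank of the matrix M(ξ) is determined as follows: rank M(ξ) = 1 if ξ₃ = 0 and (ξ₁,ξ₂) ≠ (0,0); rank M(ξ) = 2 if (ξ₁,ξ₂) = (0,0) and ξ₃ ≠ 0; and rank M(ξ) = 3 if ξ₃ ≠ 0 and (ξ₁,ξ₂) ≠ (0,0). Equivalently, among the three eigenvalues of M(ξ), exactly one is nonzero in the first case, exactly two in the second case, and all three in the third case. -/
/-!
`M(ξ) = c(ξ) • N(ξ)`, where `c = (1 − F²)/(|ξ|³|ξ|_F)` is nonzero since `0 < F ≠ 1`, so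
`rank M = rank N`. On the plane `ξ₃ = 0` the bracket matrix `N` is `diag(0, 0, −|ξ_h|²)`, and on
the axis `ξ_h = 0` it is `diag(ξ₃², ξ₃², 0)`. Elsewhere a rotation about the `ξ₃`-axis reduces
`det N` to a `2 × 2` determinant, giving
`det N = −|ξ_h|² ξ₃⁴ ((1 − |ξ_h|² A_F)(1 − ξ₃² B_F) + (2 − ξ₃² B_F)²)`,
and the explicit forms of `A_F`, `B_F` make the last factor identically `1`.
-/

open Matrix

lemma Matrix.rank_smul_of_ne_zero {m n R : Type*} [Fintype n] [CommRing R] [NoZeroDivisors R]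
    {c : R} (hc : c ≠ 0) (B : Matrix m n R) : (c • B).rank = B.rank :=
  rank_smul_of_mem_nonZeroDivisors B (mem_nonZeroDivisors_of_ne_zero hc)

lemma Matrix.rank_diagonal_zero_zero {K : Type*} [Field K] {a : K} (ha : a ≠ 0) :
    (diagonal ![0, 0, a]).rank = 1 := by
  classical
  rw [rank_diagonal, Fintype.card_subtype]
  simp [Finset.filter_insert, Finset.filter_singleton, ha, Fin.univ_succ]

lemma Matrix.rank_diagonal_self_self_zero {K : Type*} [Field K] {a : K}
    (ha : a ≠ 0) : (diagonal ![a, a, 0]).rank = 2 := by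
  classical
  rw [rank_diagonal, Fintype.card_subtype]
  simp [Finset.filter_insert, Finset.filter_singleton, ha, Fin.univ_succ]

def MmatCore (ξ1 ξ2 ξ3 a b : ℝ) : Matrix (Fin 3) (Fin 3) ℝ :=
  !![ξ3 ^ 2 * (1 - ξ1 ^ 2 * a), -(ξ1 * ξ2 * ξ3 ^ 2) * a, ξ1 * ξ3 * (2 - ξ3 ^ 2 * b);
    -(ξ1 * ξ2 * ξ3 ^ 2) * a, ξ3 ^ 2 * (1 - ξ2 ^ 2 * a), ξ2 * ξ3 * (2 - ξ3 ^ 2 * b);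
    ξ1 * ξ3 * (2 - ξ3 ^ 2 * b), ξ2 * ξ3 * (2 - ξ3 ^ 2 * b), -(ξ1 ^ 2 + ξ2 ^ 2) * (1 - ξ3 ^ 2 * b)]

lemma Mmat_eq_smul_MmatCore (F ξ1 ξ2 ξ3 : ℝ) :
    Mmat F ξ1 ξ2 ξ3 = cCoef F ξ1 ξ2 ξ3 • MmatCore ξ1 ξ2 ξ3
      (3 / (ξ1 ^ 2 + ξ2 ^ 2 + ξ3 ^ 2) + 1 / (ξ1 ^ 2 + ξ2 ^ 2 + F ^ 2 * ξ3 ^ 2))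
      (3 / (ξ1 ^ 2 + ξ2 ^ 2 + ξ3 ^ 2) + F ^ 2 / (ξ1 ^ 2 + ξ2 ^ 2 + F ^ 2 * ξ3 ^ 2)) :=
  rfl

lemma det_MmatCore (ξ1 ξ2 ξ3 a b : ℝ) :
    (MmatCore ξ1 ξ2 ξ3 a b).det = -(ξ1 ^ 2 + ξ2 ^ 2) * ξ3 ^ 4 *
      ((1 - (ξ1 ^ 2 + ξ2 ^ 2) * a) * (1 - ξ3 ^ 2 * b) + (2 - ξ3 ^ 2 * b) ^ 2) := by
  rw [MmatCore, det_fin_three]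
  simp only [of_apply, cons_val', cons_val_zero, cons_val_one, cons_val_two, empty_val',
    cons_val_fin_one, head_fin_const, tail_cons, head_cons]
  ring

lemma MmatCore_horizontal (ξ1 ξ2 a b : ℝ) :
    MmatCore ξ1 ξ2 0 a b = diagonal ![0, 0, -(ξ1 ^ 2 + ξ2 ^ 2)] := by
  ext i j
  fin_cases i <;> fin_cases j <;> simp [MmatCore]

lemma MmatCore_vertical (ξ3 a b : ℝ) :
    MmatCore 0 0 ξ3 a b = diagonal ![ξ3 ^ 2, ξ3 ^ 2, 0] := by
  ext i j
  fin_cases i <;> fin_cases j <;> simp [MmatCore]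

lemma MmatCore_det_factor_eq_one (F h z : ℝ) (hS : h + z ≠ 0) (hP : h + F ^ 2 * z ≠ 0) :
    (1 - h * (3 / (h + z) + 1 / (h + F ^ 2 * z))) *
        (1 - z * (3 / (h + z) + F ^ 2 / (h + F ^ 2 * z))) +
      (2 - z * (3 / (h + z) + F ^ 2 / (h + F ^ 2 * z))) ^ 2 = 1 := by
  rw [div_add_div _ _ hS hP, div_add_div _ _ hS hP]
  field_simp
  ring

lemma sq_add_sq_ne_zero_of_not_and {R : Type*} [CommRing R] [LinearOrder R]
    [IsStrictOrderedRing R] {a b : R} (h : ¬(a = 0 ∧ b = 0)) : a ^ 2 + b ^ 2 ≠ 0 := by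
  rcases not_and_or.mp h with h | h <;> positivity

lemma cCoef_ne_zero {F ξ1 ξ2 ξ3 : ℝ} (hF : 0 < F) (hF1 : F ≠ 1)
    (hξ : ¬(ξ1 = 0 ∧ ξ2 = 0 ∧ ξ3 = 0)) : cCoef F ξ1 ξ2 ξ3 ≠ 0 := by
  have hF2 : 1 - F ^ 2 ≠ 0 :=
    sub_ne_zero.mpr fun h => hF1 ((pow_eq_one_iff_of_nonneg hF.le two_ne_zero).mp h.symm)
  obtain h | h | h : ξ1 ≠ 0 ∨ ξ2 ≠ 0 ∨ ξ3 ≠ 0 := by tauto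
  all_goals exact div_ne_zero hF2 (by positivity)

lemma rank_Mmat_horizontal {F ξ1 ξ2 : ℝ} (hF : 0 < F) (hF1 : F ≠ 1) (hξ : ¬(ξ1 = 0 ∧ ξ2 = 0)) :
    (Mmat F ξ1 ξ2 0).rank = 1 := by
  rw [Mmat_eq_smul_MmatCore, rank_smul_of_ne_zero (cCoef_ne_zero hF hF1 (by tauto)),
    MmatCore_horizontal]
  exact rank_diagonal_zero_zero (neg_ne_zero.mpr (sq_add_sq_ne_zero_of_not_and hξ))

lemma rank_Mmat_vertical {F ξ3 : ℝ} (hF : 0 < F) (hF1 : F ≠ 1) (hξ : ξ3 ≠ 0) :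
    (Mmat F 0 0 ξ3).rank = 2 := by
  rw [Mmat_eq_smul_MmatCore, rank_smul_of_ne_zero (cCoef_ne_zero hF hF1 (by tauto)),
    MmatCore_vertical]
  exact rank_diagonal_self_self_zero (pow_ne_zero 2 hξ)

lemma rank_Mmat_of_ne_zero {F ξ1 ξ2 ξ3 : ℝ} (hF : 0 < F) (hF1 : F ≠ 1)
    (hh : ¬(ξ1 = 0 ∧ ξ2 = 0)) (h3 : ξ3 ≠ 0) : (Mmat F ξ1 ξ2 ξ3).rank = 3 := by
  rw [Mmat_eq_smul_MmatCore, rank_smul_of_ne_zero (cCoef_ne_zero hF hF1 (by tauto))]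
  refine rank_of_det_ne_zero ?_
  rw [det_MmatCore, MmatCore_det_factor_eq_one F _ _ (by positivity) (by positivity), mul_one]
  exact mul_ne_zero (neg_ne_zero.mpr (sq_add_sq_ne_zero_of_not_and hh)) (pow_ne_zero 4 h3)

theorem Mmat_rank_general (F ξ1 ξ2 ξ3 : ℝ) (hF : 0 < F) (hF1 : F ≠ 1) :
    ((ξ3 = 0 ∧ ¬(ξ1 = 0 ∧ ξ2 = 0)) → (Mmat F ξ1 ξ2 ξ3).rank = 1) ∧
    ((ξ1 = 0 ∧ ξ2 = 0 ∧ ξ3 ≠ 0) → (Mmat F ξ1 ξ2 ξ3).rank = 2) ∧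
    ((ξ3 ≠ 0 ∧ ¬(ξ1 = 0 ∧ ξ2 = 0)) → (Mmat F ξ1 ξ2 ξ3).rank = 3) := by
  refine ⟨?_, ?_, ?_⟩
  · rintro ⟨rfl, hh⟩
    exact rank_Mmat_horizontal hF hF1 hh
  · rintro ⟨rfl, rfl, h3⟩
    exact rank_Mmat_vertical hF hF1 h3
  · rintro ⟨h3, hh⟩
    exact rank_Mmat_of_ne_zero hF hF1 hh h3

/-- Rank of the Hessian matrix `M(ξ)` when `F ≠ 1`: rank 1 on the horizontal
plane (off the axis), rank 2 on the vertical axis, rank 3 elsewhere. -/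
theorem Mmat_rank (F ξ1 ξ2 ξ3 : ℝ) (hF : 0 < F) (hF1 : F ≠ 1)
    (hξ : ¬(ξ1 = 0 ∧ ξ2 = 0 ∧ ξ3 = 0)) :
    ((ξ3 = 0 ∧ ¬(ξ1 = 0 ∧ ξ2 = 0)) → (Mmat F ξ1 ξ2 ξ3).rank = 1) ∧
    ((ξ1 = 0 ∧ ξ2 = 0 ∧ ξ3 ≠ 0) → (Mmat F ξ1 ξ2 ξ3).rank = 2) ∧
    ((ξ3 ≠ 0 ∧ ¬(ξ1 = 0 ∧ ξ2 = 0)) → (Mmat F ξ1 ξ2 ξ3).rank = 3) :=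
  Mmat_rank_general F ξ1 ξ2 ξ3 hF hF1
end
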